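/- For (x,y) ∈ ∂²F let L(x,y) ∈ ℕ denote the length of the maximal common initial segment of x and y. Then the uniform current η_A has density 2k(2k−1)^(2L(x,y)−1) with respect to the product measure μ_A × μ_A: for every Borel set W ⊆ ∂²F, η_A(W) = ∫_W 2k(2k−1)^(2L(x,y)−1) d(μ_A × μ_A)(x,y). -/

import Mathlib

open MeasureTheory Filter Topology
open scoped ENNReal NNReal

namespace FGC

noncomputable section

variable (k : ℕ)

/-- The alphabet `A = Σ ∪ Σ⁻¹`: a letter is a basis element together with a sign. -/
abbrev L := Fin k × Bool

/-- The inverse of a letter. -/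
def linv (a : L k) : L k := (a.1, !a.2)

/-- A right-infinite word is (freely) reduced if no letter is followed by its inverse. -/
def Red (x : ℕ → L k) : Prop := ∀ n, x (n + 1) ≠ linv k (x n)

/-- The boundary `∂F`: the set of infinite freely reduced words in the alphabet `A`. -/
def Boundary : Type := { x : ℕ → L k // Red k x }

instance : TopologicalSpace (Boundary k) :=
  inferInstanceAs (TopologicalSpace { x : ℕ → L k // Red k x })

instance : MeasurableSpace (Boundary k) := borel _

instance : BorelSpace (Boundary k) := ⟨rfl⟩

/-- The free group of rank `k`. -/
abbrev F := FreeGroup (Fin k)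

/-- The word length `|v|` of an element of `F`. -/
def wordLength (v : F k) : ℕ := v.toWord.length

/-- The cyclically reduced length `‖v‖`: the minimal word length among conjugates of `v`. -/
def cyclLength (v : F k) : ℕ := sInf { n | ∃ g : F k, wordLength k (g * v * g⁻¹) = n }

/-- The cylinder `Cyl v ⊆ ∂F` of rays starting with the reduced word of `v`. -/
def Cyl (v : F k) : Set (Boundary k) :=
  { x | ∀ i : Fin v.toWord.length, x.1 i = v.toWord.get i }

/-- The shift deleting the first letter of a ray. -/
def shift (x : ℕ → L k) : ℕ → L k := fun n => x (n + 1)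

/-- Prepending a letter to a ray. -/
def cons (a : L k) (x : ℕ → L k) : ℕ → L k
  | 0 => a
  | n + 1 => x n

/-- Prepending a (reversed) finite word to a ray, performing free reduction. -/
def prependAux : List (L k) → (ℕ → L k) → ℕ → L k
  | [], x => x
  | a :: r, x => prependAux r (if x 0 = linv k a then shift k x else cons k a x)

theorem red_shift {x : ℕ → L k} (hx : Red k x) : Red k (shift k x) :=
  fun n => hx (n + 1)

theorem red_cons {a : L k} {x : ℕ → L k} (hx : Red k x) (h : x 0 ≠ linv k a) :
    Red k (cons k a x) := by
  intro n
  cases n with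
  | zero => exact h
  | succ m => exact hx m

theorem red_prependAux : ∀ (r : List (L k)) {x : ℕ → L k}, Red k x → Red k (prependAux k r x)
  | [], _, hx => hx
  | a :: r, x, hx => by
    by_cases h : x 0 = linv k a
    · simp only [prependAux, if_pos h]
      exact red_prependAux r (red_shift k hx)
    · simp only [prependAux, if_neg h]
      exact red_prependAux r (red_cons k hx h)

/-- The left-translation action of `F` on `∂F`: concatenate and freely reduce. -/
def act (g : F k) (x : Boundary k) : Boundary k :=
  ⟨prependAux k g.toWord.reverse x.1, red_prependAux k _ x.2⟩

/-- The shift map `T : ∂F → ∂F`. -/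
def Tmap (x : Boundary k) : Boundary k := ⟨shift k x.1, red_shift k x.2⟩

/-- The double boundary `∂²F`, as the complement of the diagonal. -/
def D2 : Set (Boundary k × Boundary k) := { p | p.1 ≠ p.2 }

/-- The diagonal action of `F` on `∂F × ∂F`. -/
def actPair (g : F k) (p : Boundary k × Boundary k) : Boundary k × Boundary k :=
  (act k g p.1, act k g p.2)

/-- The cylinder `Cyl[1,w]` of geodesics through the segment from `1` to `w`. -/
def baseCyl (w : F k) : Set (Boundary k × Boundary k) :=
  { p | p.1.1 0 ≠ p.2.1 0 ∧ p.2 ∈ Cyl k w }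

/-- The base-ball `B = Cyl[1,1]` of geodesics through the base point. -/
def baseBall : Set (Boundary k × Boundary k) := baseCyl k 1

/-- The cylinder `Cyl[x,y] = x · Cyl[1, x⁻¹y]`. -/
def Cyl2 (x y : F k) : Set (Boundary k × Boundary k) :=
  actPair k x '' baseCyl k (x⁻¹ * y)

/-- A geodesic current: a Borel measure on `∂F × ∂F` giving no mass to the diagonal,
invariant under the diagonal `F`-action, and finite on compact subsets of `∂²F`. -/
def IsCurrent (η : Measure (Boundary k × Boundary k)) : Prop :=
  η { p | p.1 = p.2 } = 0 ∧
  (∀ g : F k, ∀ W : Set (Boundary k × Boundary k), MeasurableSet W →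
    η (actPair k g ⁻¹' W) = η W) ∧
  (∀ K : Set (Boundary k × Boundary k), K ⊆ D2 k → IsCompact K → η K < ⊤)

/-- The element of `F` given by the first `n` letters of a ray. -/
def prefixEl (x : Boundary k) (n : ℕ) : F k :=
  FreeGroup.mk (List.ofFn fun i : Fin n => x.1 i)

/-- `b : ∂F → ∂F` is the boundary extension of the automorphism `Φ`: for every ray `x`
and every `m`, the length-`m` prefix of `b x` is the length-`m` prefix of the reduced
word of `Φ (x|_n)` for all sufficiently large `n`. -/
def IsBdryExt (Φ : F k ≃* F k) (b : Boundary k → Boundary k) : Prop :=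
  ∀ x : Boundary k, ∀ m : ℕ, ∃ N : ℕ, ∀ n ≥ N,
    (Φ (prefixEl k x n)).toWord.take m = List.ofFn fun i : Fin m => (b x).1 i

/-- The map `∂Φ × ∂Φ` on pairs. -/
def pairMap (b : Boundary k → Boundary k) (p : Boundary k × Boundary k) :
    Boundary k × Boundary k := (b p.1, b p.2)

/-- The length of an automorphism with boundary map `b`, w.r.t. the current `η`:
`L(Φ) = η((∂Φ × ∂Φ)⁻¹ B)`. -/
def autLen (η : Measure (Boundary k × Boundary k)) (b : Boundary k → Boundary k) : ℝ≥0∞ :=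
  η (pairMap k b ⁻¹' baseBall k)

/-- The subgroup of inner automorphisms. -/
abbrev Inn : Subgroup (MulAut (F k)) := (MulAut.conj : F k →* MulAut (F k)).range

/-- `Out(F) = Aut(F)/Inn(F)` as a coset space. -/
abbrev OutQ := MulAut (F k) ⧸ Inn k

/-- A simple automorphism: induced by a permutation of the basis, or inner. -/
def SimpleAut (Φ : MulAut (F k)) : Prop :=
  (∃ σ : Equiv.Perm (Fin k), ∀ i, Φ (FreeGroup.of i) = FreeGroup.of (σ i)) ∨
  (∃ v : F k, ∀ x, Φ x = v * x * v⁻¹)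

/-- A Whitehead automorphism of the second kind. -/
def Whitehead2 (τ : MulAut (F k)) : Prop :=
  ∃ a : Fin k, ∀ i : Fin k,
    τ (FreeGroup.of i) = FreeGroup.of i ∨
    τ (FreeGroup.of i) = FreeGroup.of i * FreeGroup.of a ∨
    τ (FreeGroup.of i) = (FreeGroup.of a)⁻¹ * FreeGroup.of i ∨
    τ (FreeGroup.of i) = (FreeGroup.of a)⁻¹ * FreeGroup.of i * FreeGroup.of a

/-- The space of frequency measures: finite `T`-invariant Borel measures on `∂F`. -/
def FreqM : Type :=
  { μ : Measure (Boundary k) //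
    IsFiniteMeasure μ ∧ ∀ W : Set (Boundary k), MeasurableSet W → μ (Tmap k ⁻¹' W) = μ W }

/-- The space of geodesic currents. -/
def Currents : Type := { η : Measure (Boundary k × Boundary k) // IsCurrent k η }

/-- Continuous functions on `∂F × ∂F` with compact support contained in `∂²F`;
these are the test functions for the weak-* topology on currents. -/
def TestF : Type :=
  { φ : Boundary k × Boundary k → ℝ //
    Continuous φ ∧ IsCompact (tsupport φ) ∧ tsupport φ ⊆ D2 k }

/-- The weak-* topology on frequency measures. -/
instance : TopologicalSpace (FreqM k) :=
  ⨅ φ : C(Boundary k, ℝ),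
    TopologicalSpace.induced (fun μ : FreqM k => ∫ x, φ x ∂μ.1) inferInstance

/-- The weak-* topology on geodesic currents. -/
instance : TopologicalSpace (Currents k) :=
  ⨅ φ : TestF k,
    TopologicalSpace.induced (fun η : Currents k => ∫ p, φ.1 p ∂η.1) inferInstance

/-- Convergence of a sequence of group elements (as reduced words) to a boundary ray. -/
def WordTendsto (pn : ℕ → F k) (p : Boundary k) : Prop :=
  ∀ m : ℕ, ∃ N : ℕ, ∀ n ≥ N, (pn n).toWord.take m = List.ofFn fun i : Fin m => p.1 i

/-- The length of the maximal common initial segment of two rays. -/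
def commonLen (p : Boundary k × Boundary k) : ℕ :=
  sSup { m : ℕ | ∀ i < m, p.1.1 i = p.2.1 i }

/-- A single letter as an element of `F`. -/
def el (a : L k) : F k := FreeGroup.mk [a]

/-- The product of per-letter constants over the reduced word of `w`. -/
def Cprod (C : L k → ℝ≥0) (w : F k) : ℝ≥0 := (w.toWord.map C).prod

/-!
A pair of distinct rays `(p, q)` lies in a product `Cyl(w a) × Cyl(w b)` with `a ≠ b`, and
there `L(p, q) = |w|`; there are countably many such pieces. For reduced words `x = w a s`,
`y = w b t` with `a ≠ b`, translating by `x` identifies `Cyl[1, x⁻¹y]` with `Cyl x × Cyl y`,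
so `η_A (Cyl x × Cyl y) = μ_A (Cyl (x⁻¹y))` with `|x⁻¹y| = |s| + |t| + 2`, which is
`2k(2k-1)^(2|w|-1) μ_A (Cyl x) μ_A (Cyl y)`. Since products of cylinders form a π-system
generating the Borel σ-algebra of `∂F × ∂F`, on each piece `η_A` is `2k(2k-1)^(2|w|-1)` times
`μ_A × μ_A`.
-/

variable {k}

open FreeGroup

theorem _root_.FreeGroup.IsReduced.invRev {α : Type*} [DecidableEq α] {l : List (α × Bool)}
    (h : FreeGroup.IsReduced l) : FreeGroup.IsReduced (invRev l) := by
  rw [isReduced_iff_reduce_eq, reduce_invRev, h.reduce_eq]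

theorem _root_.FreeGroup.isReduced_invRev_cons_append_cons {α : Type*} [DecidableEq α]
    {a b : α × Bool} {s t : List (α × Bool)} (hs : FreeGroup.IsReduced (a :: s))
    (ht : FreeGroup.IsReduced (b :: t)) (hab : a ≠ b) :
    FreeGroup.IsReduced (invRev (a :: s) ++ b :: t) := by
  refine List.isChain_append.2 ⟨hs.invRev, ht, fun c hc d hd hcd => ?_⟩
  simp only [invRev, List.map_cons, List.reverse_cons, List.getLast?_append,
    List.getLast?_singleton, Option.some_or, Option.mem_some_iff, List.head?_cons] at hc hd
  subst hc hd
  obtain ⟨a₁, a₂⟩ := a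
  obtain ⟨b₁, b₂⟩ := b
  simp only at hcd ⊢
  subst hcd
  cases a₂ <;> cases b₂ <;> simp_all

theorem _root_.FreeGroup.mk_append_inv_mul_mk_append {α : Type*} [DecidableEq α]
    (w u u' : List (α × Bool)) : (mk (w ++ u))⁻¹ * mk (w ++ u') = mk (invRev u ++ u') := by
  rw [← mul_mk, ← mul_mk, mul_inv_rev, mul_assoc, inv_mul_cancel_left, inv_mk, mul_mk]

theorem _root_.ENNReal.inv_mul_pow_add_add_one {K R : ℝ≥0∞} (hK₀ : K ≠ 0) (hK : K ≠ ⊤)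
    (hR₀ : R ≠ 0) (hR : R ≠ ⊤) (n σ τ : ℕ) :
    (K * R ^ (σ + τ + 1))⁻¹ =
      K * R ^ (2 * (n : ℤ) - 1) * ((K * R ^ (n + σ))⁻¹ * (K * R ^ (n + τ))⁻¹) := by
  have hinv : ∀ m : ℕ, (K * R ^ m)⁻¹ = K⁻¹ * R ^ (-(m : ℤ)) := fun m => by
    rw [ENNReal.mul_inv (.inl hK₀) (.inl hK), ← zpow_natCast, ENNReal.zpow_neg]
  rw [hinv, hinv, hinv]
  calc K⁻¹ * R ^ (-((σ + τ + 1 : ℕ) : ℤ))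
      = K * K⁻¹ * K⁻¹ * (R ^ (2 * (n : ℤ) - 1) * R ^ (-((n + σ : ℕ) : ℤ)) *
          R ^ (-((n + τ : ℕ) : ℤ))) := by
        rw [ENNReal.mul_inv_cancel hK₀ hK, one_mul, ← ENNReal.zpow_add hR₀ hR,
          ← ENNReal.zpow_add hR₀ hR]
        congr 2
        push_cast
        ring
    _ = _ := by ring

lemma ne_linv_iff {a b : L k} : b ≠ linv k a ↔ (a.1 = b.1 → a.2 = b.2) := by
  obtain ⟨a₁, a₂⟩ := a
  obtain ⟨b₁, b₂⟩ := b
  cases a₂ <;> cases b₂ <;> simp [linv, eq_comm]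

lemma head?_invRev (l : List (L k)) : (invRev l).head? = l.getLast?.map (linv k) := by
  rw [show invRev l = (l.map (linv k)).reverse from rfl, List.head?_reverse, List.getLast?_map]

lemma isReduced_append_singleton_iff {l : List (L k)} {e : L k} :
    FreeGroup.IsReduced (l ++ [e]) ↔
      FreeGroup.IsReduced l ∧ ∀ c ∈ l.getLast?, e ≠ linv k c := by
  simp only [FreeGroup.IsReduced, List.isChain_append, List.isChain_singleton, true_and,
    List.head?_cons, Option.mem_def, Option.some.injEq, forall_eq', ne_linv_iff]

/-- Concatenation of a word and a ray without free reduction, unlike `prependAux`. -/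
def prependWord (l : List (L k)) (x : ℕ → L k) : ℕ → L k := l.foldr (cons k) x

@[simp] lemma prependWord_nil (x : ℕ → L k) : prependWord [] x = x := rfl

@[simp] lemma prependWord_cons (a : L k) (l : List (L k)) (x : ℕ → L k) :
    prependWord (a :: l) x = cons k a (prependWord l x) := rfl

lemma prependWord_append (l₁ l₂ : List (L k)) (x : ℕ → L k) :
    prependWord (l₁ ++ l₂) x = prependWord l₁ (prependWord l₂ x) :=
  List.foldr_append

lemma prependWord_of_lt {l : List (L k)} {x : ℕ → L k} {i : ℕ} (h : i < l.length) :
    prependWord l x i = l[i] := by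
  induction l generalizing i with
  | nil => simp at h
  | cons a l ih =>
    cases i with
    | zero => rfl
    | succ i => exact ih (by simpa using h)

lemma prependWord_length_add (l : List (L k)) (x : ℕ → L k) (i : ℕ) :
    prependWord l x (l.length + i) = x i := by
  induction l with
  | nil => simp
  | cons a l ih => simpa [Nat.succ_add, cons] using ih

lemma head?_append_singleton (l : List (L k)) (x : ℕ → L k) :
    (l ++ [x 0]).head? = some (prependWord l x 0) := by
  cases l <;> rfl

lemma red_prependWord {l : List (L k)} {x : ℕ → L k}
    (hl : FreeGroup.IsReduced (l ++ [x 0])) (hx : Red k x) : Red k (prependWord l x) := by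
  induction l with
  | nil => exact hx
  | cons a l ih =>
    rw [List.cons_append, FreeGroup.IsReduced, List.isChain_cons, head?_append_singleton] at hl
    exact red_cons k (ih hl.2) (ne_linv_iff.2 (hl.1 _ rfl))

lemma prependAux_append (l₁ l₂ : List (L k)) (x : ℕ → L k) :
    prependAux k (l₁ ++ l₂) x = prependAux k l₂ (prependAux k l₁ x) := by
  induction l₁ generalizing x with
  | nil => rfl
  | cons a l ih => exact ih _

lemma prependAux_reverse_of_isReduced {l : List (L k)} {x : ℕ → L k}
    (h : FreeGroup.IsReduced (l ++ [x 0])) : prependAux k l.reverse x = prependWord l x := by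
  induction l using List.reverseRecOn generalizing x with
  | nil => rfl
  | append_singleton l a ih =>
    obtain ⟨hla, hx0⟩ := isReduced_append_singleton_iff.1 h
    have hx0 : x 0 ≠ linv k a := hx0 a (by simp)
    rw [List.reverse_concat, prependAux, if_neg hx0, prependWord_append]
    exact ih hla

lemma prependAux_reverse_prependWord_invRev (l : List (L k)) (x : ℕ → L k) :
    prependAux k l.reverse (prependWord (invRev l) x) = x := by
  induction l using List.reverseRecOn generalizing x with
  | nil => rfl
  | append_singleton l a ih =>
    have hinv : invRev [a] = [linv k a] := rfl
    rw [List.reverse_concat, invRev_append, prependWord_append, hinv, prependWord_cons,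
      prependWord_nil, prependAux]
    exact (if_pos rfl).symm ▸ ih x

def rayPrefix (x : ℕ → L k) (n : ℕ) : List (L k) := List.ofFn fun i : Fin n => x i

@[simp] lemma length_rayPrefix (x : ℕ → L k) (n : ℕ) : (rayPrefix x n).length = n :=
  List.length_ofFn

lemma rayPrefix_succ (x : ℕ → L k) (n : ℕ) :
    rayPrefix x (n + 1) = rayPrefix x n ++ [x n] := by
  rw [rayPrefix, List.ofFn_succ', List.concat_eq_append]
  rfl

lemma rayPrefix_eq_rayPrefix_iff {x y : ℕ → L k} {n : ℕ} :
    rayPrefix x n = rayPrefix y n ↔ ∀ i < n, x i = y i := by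
  simp [rayPrefix, List.ofFn_inj, funext_iff, Fin.forall_iff]

lemma rayPrefix_isPrefix (x : ℕ → L k) {m n : ℕ} (h : m ≤ n) :
    rayPrefix x m <+: rayPrefix x n := by
  obtain ⟨d, rfl⟩ := Nat.exists_eq_add_of_le h
  exact ⟨List.ofFn fun i : Fin d => x (m + i), by simp [rayPrefix, List.ofFn_add]⟩

lemma rayPrefix_eq_append_singleton {x : ℕ → L k} {l : List (L k)} {a : L k}
    (h : rayPrefix x (l ++ [a]).length = l ++ [a]) :
    rayPrefix x l.length = l ∧ x l.length = a := by
  rw [List.length_append, List.length_singleton, rayPrefix_succ] at h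
  simpa using List.append_inj' h rfl

lemma isReduced_rayPrefix {x : ℕ → L k} (hx : Red k x) (n : ℕ) :
    FreeGroup.IsReduced (rayPrefix x n) := by
  induction n with
  | zero => exact List.isChain_nil
  | succ n ih =>
    rw [rayPrefix_succ, isReduced_append_singleton_iff]
    refine ⟨ih, fun c hc => ?_⟩
    cases n with
    | zero => simp [rayPrefix] at hc
    | succ n =>
      rw [rayPrefix_succ, List.getLast?_concat, Option.mem_some_iff] at hc
      exact hc ▸ hx n

lemma rayPrefix_prependWord (l : List (L k)) (x : ℕ → L k) :
    rayPrefix (prependWord l x) l.length = l :=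
  List.ext_getElem (by simp) fun i _ hi => by simp [rayPrefix, prependWord_of_lt hi]

lemma prependWord_rayPrefix (x : ℕ → L k) (n : ℕ) :
    prependWord (rayPrefix x n) (fun i => x (n + i)) = x := by
  funext i
  rcases lt_or_ge i n with hi | hi
  · rw [prependWord_of_lt (by simpa using hi)]
    simp [rayPrefix]
  · obtain ⟨j, rfl⟩ := Nat.exists_eq_add_of_le hi
    simpa using prependWord_length_add (rayPrefix x n) (fun i => x (n + i)) j

lemma mem_cyl_iff {v : F k} {p : Boundary k} :
    p ∈ Cyl k v ↔ rayPrefix p.1 v.toWord.length = v.toWord := by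
  simp only [Cyl, Set.mem_ofPred_eq, rayPrefix, List.ext_get_iff, List.length_ofFn,
    List.get_ofFn, true_and]
  exact ⟨fun h i _ _ => h ⟨i, by omega⟩, fun h i => h i i.2 (by simp)⟩

lemma mem_cyl_mk {l : List (L k)} (hl : FreeGroup.IsReduced l) {p : Boundary k} :
    p ∈ Cyl k (mk l) ↔ rayPrefix p.1 l.length = l := by
  rw [mem_cyl_iff, toWord_mk, hl.reduce_eq]

lemma mem_cyl_mk_iff_exists {l : List (L k)} (hl : FreeGroup.IsReduced l) {p : Boundary k} :
    p ∈ Cyl k (mk l) ↔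
      ∃ r, Red k r ∧ FreeGroup.IsReduced (l ++ [r 0]) ∧ p.1 = prependWord l r := by
  rw [mem_cyl_mk hl]
  refine ⟨fun h => ⟨fun i => p.1 (l.length + i), fun n => p.2 (l.length + n), ?_, ?_⟩, ?_⟩
  · have hp := isReduced_rayPrefix p.2 (l.length + 1)
    rw [rayPrefix_succ, h] at hp
    simpa using hp
  · simpa [h] using (prependWord_rayPrefix p.1 l.length).symm
  · rintro ⟨r, -, -, hp⟩
    rw [hp, rayPrefix_prependWord]

lemma cyl_prefixEl (x : Boundary k) (n : ℕ) :
    Cyl k (prefixEl k x n) = {p | p.1 ∈ PiNat.cylinder x.1 n} := by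
  ext p
  change p ∈ Cyl k (mk (rayPrefix x.1 n)) ↔ _
  rw [mem_cyl_mk (isReduced_rayPrefix x.2 n)]
  simp [rayPrefix_eq_rayPrefix_iff, PiNat.mem_cylinder_iff]

lemma cyl_one : Cyl k 1 = Set.univ :=
  Set.eq_univ_of_forall fun _ i => absurd i.2 (by simp)

lemma isOpen_cyl (v : F k) : IsOpen (Cyl k v) := by
  have : Cyl k v =
      ⋂ i : Fin v.toWord.length, (fun p : Boundary k => p.1 i) ⁻¹' {v.toWord.get i} := by
    ext
    simp [Cyl]
  rw [this]
  exact isOpen_iInter_of_finite fun i =>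
    (isOpen_discrete _).preimage ((continuous_apply _).comp continuous_subtype_val)

lemma measurableSet_cyl (v : F k) : MeasurableSet (Cyl k v) :=
  (isOpen_cyl v).measurableSet

lemma isTopologicalBasis_cyl : TopologicalSpace.IsTopologicalBasis (Set.range (Cyl k)) := by
  refine TopologicalSpace.isTopologicalBasis_of_isOpen_of_nhds ?_ fun x U hx hU => ?_
  · rintro _ ⟨v, rfl⟩
    exact isOpen_cyl v
  obtain ⟨V, hV, rfl⟩ := isOpen_induced_iff.1 hU
  obtain ⟨_, ⟨y, n, rfl⟩, hxy, hyV⟩ :=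
    (PiNat.isTopologicalBasis_cylinders _).exists_subset_of_mem_open hx hV
  refine ⟨Cyl k (prefixEl k x n), ⟨_, rfl⟩, ?_, ?_⟩
  · rw [cyl_prefixEl]
    exact PiNat.self_mem_cylinder x.1 n
  · rw [cyl_prefixEl]
    intro p hp
    exact hyV (PiNat.mem_cylinder_iff_eq.1 hxy ▸ hp)

instance : SecondCountableTopology (Boundary k) :=
  TopologicalSpace.Subtype.secondCountableTopology (Red k)

lemma measurableSpace_eq_generateFrom_cyl :
    (inferInstance : MeasurableSpace (Boundary k)) = .generateFrom (Set.range (Cyl k)) :=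
  isTopologicalBasis_cyl.borel_eq_generateFrom

lemma cyl_subset_cyl_of_isPrefix {u v : F k} (h : u.toWord <+: v.toWord) :
    Cyl k v ⊆ Cyl k u := by
  intro p hp
  rw [mem_cyl_iff] at hp ⊢
  have hu : rayPrefix p.1 u.toWord.length <+: v.toWord :=
    hp ▸ rayPrefix_isPrefix p.1 h.length_le
  exact (List.prefix_of_prefix_length_le hu h (by simp)).eq_of_length (by simp)

lemma isPrefix_or_isPrefix_of_mem_cyl {u v : F k} {p : Boundary k} (hu : p ∈ Cyl k u)
    (hv : p ∈ Cyl k v) : u.toWord <+: v.toWord ∨ v.toWord <+: u.toWord := by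
  rw [mem_cyl_iff] at hu hv
  rw [← hu, ← hv]
  rcases le_total u.toWord.length v.toWord.length with h | h
  · exact .inl (rayPrefix_isPrefix p.1 h)
  · exact .inr (rayPrefix_isPrefix p.1 h)

lemma isPiSystem_cyl : IsPiSystem (Set.range (Cyl k)) := by
  rintro _ ⟨u, rfl⟩ _ ⟨v, rfl⟩ ⟨p, hu, hv⟩
  rcases isPrefix_or_isPrefix_of_mem_cyl hu hv with h | h
  · exact ⟨v, (Set.inter_eq_right.2 (cyl_subset_cyl_of_isPrefix h)).symm⟩
  · exact ⟨u, (Set.inter_eq_left.2 (cyl_subset_cyl_of_isPrefix h)).symm⟩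

lemma cyl_mk_inter_cyl {l : List (L k)} (hl : FreeGroup.IsReduced l) (v : F k) :
    Cyl k (mk l) ∩ Cyl k v = ∅ ∨ ∃ s, FreeGroup.IsReduced (l ++ s) ∧
      Cyl k (mk l) ∩ Cyl k v = Cyl k (mk (l ++ s)) := by
  rcases (Cyl k (mk l) ∩ Cyl k v).eq_empty_or_nonempty with h | ⟨p, hpl, hpv⟩
  · exact .inl h
  have hw : (mk l).toWord = l := by rw [toWord_mk, hl.reduce_eq]
  refine .inr ?_
  rcases isPrefix_or_isPrefix_of_mem_cyl hpl hpv with h | h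
  · obtain ⟨s, hs⟩ := hw ▸ h
    refine ⟨s, hs ▸ isReduced_toWord, ?_⟩
    rw [Set.inter_eq_right.2 (cyl_subset_cyl_of_isPrefix h), hs, mk_toWord]
  · refine ⟨[], by simpa using hl, ?_⟩
    rw [List.append_nil, Set.inter_eq_left.2 (cyl_subset_cyl_of_isPrefix h)]

lemma prod_measurableSpace_eq_generateFrom_cyl :
    (inferInstance : MeasurableSpace (Boundary k × Boundary k)) =
      .generateFrom (Set.image2 (· ×ˢ ·) (Set.range (Cyl k)) (Set.range (Cyl k))) := by
  have hspan : IsCountablySpanning (Set.range (Cyl k)) :=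
    ⟨fun _ => Cyl k 1, fun _ => ⟨1, rfl⟩, by rw [cyl_one, Set.iUnion_const]⟩
  rw [← generateFrom_prod_eq hspan hspan, ← measurableSpace_eq_generateFrom_cyl]

lemma restrict_eq_of_cyl_prod {η ν : Measure (Boundary k × Boundary k)}
    {U : Set (Boundary k × Boundary k)} (hη : η U ≠ ⊤)
    (h : ∀ u v : F k, η (U ∩ Cyl k u ×ˢ Cyl k v) = ν (U ∩ Cyl k u ×ˢ Cyl k v)) :
    η.restrict U = ν.restrict U := by
  have : IsFiniteMeasure (η.restrict U) := ⟨by simpa [lt_top_iff_ne_top]⟩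
  refine ext_of_generate_finite _ prod_measurableSpace_eq_generateFrom_cyl
    (isPiSystem_cyl.prod isPiSystem_cyl) ?_ ?_
  · rintro _ ⟨_, ⟨u, rfl⟩, _, ⟨v, rfl⟩, rfl⟩
    have huv := (measurableSet_cyl u).prod (measurableSet_cyl v)
    rw [Measure.restrict_apply huv, Measure.restrict_apply huv, Set.inter_comm]
    exact h u v
  · simpa [cyl_one] using h 1 1

lemma act_mk_of_isReduced {l : List (L k)} {x : Boundary k}
    (h : FreeGroup.IsReduced (l ++ [x.1 0])) : (act k (mk l) x).1 = prependWord l x.1 := by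
  change prependAux k (mk l).toWord.reverse x.1 = _
  rw [toWord_mk, (h.infix (List.prefix_append l _).isInfix).reduce_eq,
    prependAux_reverse_of_isReduced h]

lemma act_mk_prependWord_invRev {w u u' : List (L k)} {r : ℕ → L k}
    (hwu : FreeGroup.IsReduced (w ++ u))
    (hw : FreeGroup.IsReduced (w ++ [prependWord u' r 0]))
    (hr : Red k (prependWord (invRev u ++ u') r)) :
    (act k (mk (w ++ u)) ⟨prependWord (invRev u ++ u') r, hr⟩).1 = prependWord (w ++ u') r := by
  change prependAux k (mk (w ++ u)).toWord.reverse (prependWord (invRev u ++ u') r) = _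
  rw [toWord_mk, hwu.reduce_eq, List.reverse_append, prependAux_append, prependWord_append,
    prependAux_reverse_prependWord_invRev, prependAux_reverse_of_isReduced hw, prependWord_append]

lemma cyl2_mk_eq_prod {w s t : List (L k)} {a b : L k}
    (hx : FreeGroup.IsReduced (w ++ a :: s)) (hy : FreeGroup.IsReduced (w ++ b :: t))
    (hab : a ≠ b) :
    Cyl2 k (mk (w ++ a :: s)) (mk (w ++ b :: t)) =
      Cyl k (mk (w ++ a :: s)) ×ˢ Cyl k (mk (w ++ b :: t)) := by
  set Z := invRev (a :: s) ++ b :: t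
  have hsuff : ∀ {l : List (L k)}, FreeGroup.IsReduced (w ++ l) → FreeGroup.IsReduced l :=
    fun h => h.infix (List.suffix_append w _).isInfix
  have hZ : ∀ {t'}, FreeGroup.IsReduced (w ++ b :: t') →
      FreeGroup.IsReduced (invRev (a :: s) ++ b :: t') :=
    fun h => isReduced_invRev_cons_append_cons (hsuff hx) (hsuff h) hab
  -- `c` is the last letter of `x`; the rays of `Cyl (x⁻¹ y)` start with its inverse.
  obtain ⟨c, hc⟩ : ∃ c, (a :: s).getLast? = some c := Option.isSome_iff_exists.1 (by simp)
  have hxc : ∀ e, FreeGroup.IsReduced (w ++ a :: s ++ [e]) ↔ e ≠ linv k c := by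
    intro e
    rw [isReduced_append_singleton_iff,
      List.getLast?_append_of_ne_nil _ (List.cons_ne_nil a s), hc]
    simp [hx]
  have hZ0 : ∀ r, prependWord Z r 0 = linv k c := by
    intro r
    have h := head?_append_singleton Z r
    rw [List.append_assoc, List.head?_append_of_ne_nil _ (by simp [invRev]), head?_invRev,
      hc] at h
    exact (Option.some_inj.1 h).symm
  have hcancel : ∀ r (hr : Red k (prependWord Z r)),
      (act k (mk (w ++ a :: s)) ⟨prependWord Z r, hr⟩).1 = prependWord (w ++ b :: t) r :=
    fun r hr =>
      act_mk_prependWord_invRev (u' := b :: t) hx (hy.infix ⟨[], t, by simp; rfl⟩) hr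
  rw [Cyl2, mk_append_inv_mul_mk_append]
  ext ⟨p, q⟩
  constructor
  · rintro ⟨⟨p₀, q₀⟩, ⟨h0, hq₀⟩, he⟩
    obtain ⟨r, -, -, hq₀r⟩ := (mem_cyl_mk_iff_exists (hZ hy)).1 hq₀
    obtain ⟨q₀, hq₀'⟩ := q₀
    subst hq₀r
    refine ⟨(mem_cyl_mk hx).2 ?_, (mem_cyl_mk hy).2 ?_⟩
    · rw [← congrArg Prod.fst he, actPair, act_mk_of_isReduced ((hxc _).2 (hZ0 r ▸ h0)),
        rayPrefix_prependWord]
    · rw [← congrArg Prod.snd he, actPair, hcancel, rayPrefix_prependWord]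
  · rintro ⟨hp, hq⟩
    obtain ⟨rp, hrp, hxrp, hprp⟩ := (mem_cyl_mk_iff_exists hx).1 hp
    obtain ⟨rq, hrq, hyrq, hqrq⟩ := (mem_cyl_mk_iff_exists hy).1 hq
    have hZrq : FreeGroup.IsReduced (Z ++ [rq 0]) := by
      simpa [Z] using hZ (t' := t ++ [rq 0]) (by simpa using hyrq)
    refine ⟨(⟨rp, hrp⟩, ⟨prependWord Z rq, red_prependWord hZrq hrq⟩), ⟨?_, ?_⟩, ?_⟩
    · change rp 0 ≠ prependWord Z rq 0
      rw [hZ0]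
      exact (hxc _).1 hxrp
    · exact (mem_cyl_mk (hZ hy)).2 (rayPrefix_prependWord _ _)
    · exact Prod.ext (Subtype.ext ((act_mk_of_isReduced hxrp).trans hprp.symm))
        (Subtype.ext ((hcancel rq _).trans hqrq.symm))

def uniformDensity (k n : ℕ) : ℝ≥0∞ :=
  (2 * k : ℝ≥0∞) * (2 * k - 1 : ℝ≥0∞) ^ (2 * (n : ℤ) - 1)

lemma two_mul_ne_zero_and_two_mul_sub_one_ne_zero (hk : 0 < k) :
    (2 * k : ℝ≥0∞) ≠ 0 ∧ (2 * k - 1 : ℝ≥0∞) ≠ 0 := by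
  have h : (2 * k - 1 : ℝ≥0∞) = ((2 * k - 1 : ℕ) : ℝ≥0∞) := by norm_cast
  exact ⟨by positivity, h ▸ by exact_mod_cast (by omega : 2 * k - 1 ≠ 0)⟩

lemma uniformDensity_ne_top (hk : 0 < k) (n : ℕ) : uniformDensity k n ≠ ⊤ :=
  have hR := (two_mul_ne_zero_and_two_mul_sub_one_ne_zero hk).2
  ENNReal.mul_ne_top (by finiteness) (ENNReal.zpow_lt_top hR (by finiteness) _).ne

lemma measure_cyl_prod_cyl {μA : Measure (Boundary k)} [SFinite μA]
    (hμA : ∀ v : F k, v ≠ 1 →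
      μA (Cyl k v) = ((2 * k : ℝ≥0∞) * (2 * k - 1) ^ (wordLength k v - 1))⁻¹)
    {ηA : Measure (Boundary k × Boundary k)}
    (hηA' : ∀ x y : F k, ηA (Cyl2 k x y) = μA (Cyl k (x⁻¹ * y)))
    {w s t : List (L k)} {a b : L k}
    (hx : FreeGroup.IsReduced (w ++ a :: s)) (hy : FreeGroup.IsReduced (w ++ b :: t))
    (hab : a ≠ b) :
    ηA (Cyl k (mk (w ++ a :: s)) ×ˢ Cyl k (mk (w ++ b :: t))) =
      uniformDensity k w.length *
        μA.prod μA (Cyl k (mk (w ++ a :: s)) ×ˢ Cyl k (mk (w ++ b :: t))) := by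
  have hz := isReduced_invRev_cons_append_cons (hx.infix (List.suffix_append w _).isInfix)
    (hy.infix (List.suffix_append w _).isInfix) hab
  have hlen : ∀ {l : List (L k)}, FreeGroup.IsReduced l → wordLength k (mk l) = l.length :=
    fun hl => by rw [wordLength, toWord_mk, hl.reduce_eq]
  have hne : ∀ {l : List (L k)}, FreeGroup.IsReduced l → l ≠ [] → mk l ≠ 1 :=
    fun hl hl' h => hl' (by rw [← hl.reduce_eq, ← toWord_mk, h, toWord_one])
  obtain ⟨hK, hR⟩ := two_mul_ne_zero_and_two_mul_sub_one_ne_zero a.1.pos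
  rw [Measure.prod_prod, ← cyl2_mk_eq_prod hx hy hab, hηA', mk_append_inv_mul_mk_append,
    hμA _ (hne hz (by simp [invRev])), hμA _ (hne hx (by simp)), hμA _ (hne hy (by simp)),
    hlen hz, hlen hx, hlen hy]
  convert ENNReal.inv_mul_pow_add_add_one hK (by finiteness) hR (by finiteness)
    w.length s.length t.length using 3 <;> simp [invRev, uniformDensity, add_assoc]

lemma commonLen_eq {p : Boundary k × Boundary k} {n : ℕ}
    (h : rayPrefix p.1.1 n = rayPrefix p.2.1 n) (h' : p.1.1 n ≠ p.2.1 n) :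
    commonLen k p = n := by
  rw [rayPrefix_eq_rayPrefix_iff] at h
  have hset : {m : ℕ | ∀ i < m, p.1.1 i = p.2.1 i} = Set.Iic n := by
    ext m
    exact ⟨fun hm => not_lt.1 fun hnm => h' (hm n hnm), fun hm i hi => h i (hi.trans_le hm)⟩
  rw [commonLen, hset, csSup_Iic]

/-- The rays of a pair in `Branch.cyl` follow `stem` together and then leave it through the
distinct letters `left` and `right`. -/
structure Branch (k : ℕ) where
  stem : List (L k)
  left : L k
  right : L k
  isReduced_left : FreeGroup.IsReduced (stem ++ [left])
  isReduced_right : FreeGroup.IsReduced (stem ++ [right])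
  left_ne_right : left ≠ right

instance : Countable (Branch k) :=
  Function.Injective.countable (f := fun i : Branch k => (i.stem, i.left, i.right))
    fun ⟨_, _, _, _, _, _⟩ ⟨_, _, _, _, _, _⟩ h => by simp_all

def Branch.cyl (i : Branch k) : Set (Boundary k × Boundary k) :=
  Cyl k (FreeGroup.mk (i.stem ++ [i.left])) ×ˢ Cyl k (FreeGroup.mk (i.stem ++ [i.right]))

lemma commonLen_of_mem_branchCyl {i : Branch k} {p : Boundary k × Boundary k}
    (hp : p ∈ i.cyl) : commonLen k p = i.stem.length := by
  obtain ⟨h₁, h₂⟩ := hp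
  obtain ⟨hw₁, ha⟩ := rayPrefix_eq_append_singleton ((mem_cyl_mk i.isReduced_left).1 h₁)
  obtain ⟨hw₂, hb⟩ := rayPrefix_eq_append_singleton ((mem_cyl_mk i.isReduced_right).1 h₂)
  exact commonLen_eq (hw₁.trans hw₂.symm) (ha ▸ hb ▸ i.left_ne_right)

lemma D2_subset_iUnion_branchCyl : D2 k ⊆ ⋃ i : Branch k, i.cyl := by
  intro p hp
  have hne : p.1.1 ≠ p.2.1 := fun h => hp (Subtype.ext h)
  set n := PiNat.firstDiff p.1.1 p.2.1
  have hw : rayPrefix p.1.1 n = rayPrefix p.2.1 n :=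
    rayPrefix_eq_rayPrefix_iff.2 fun i hi => PiNat.apply_eq_of_lt_firstDiff hi
  have h₁ : rayPrefix p.1.1 (n + 1) = rayPrefix p.1.1 n ++ [p.1.1 n] := rayPrefix_succ _ _
  have h₂ : rayPrefix p.2.1 (n + 1) = rayPrefix p.1.1 n ++ [p.2.1 n] := hw ▸ rayPrefix_succ _ _
  have hr₁ := h₁ ▸ isReduced_rayPrefix p.1.2 (n + 1)
  have hr₂ := h₂ ▸ isReduced_rayPrefix p.2.2 (n + 1)
  refine Set.mem_iUnion.2 ⟨⟨_, _, _, hr₁, hr₂, PiNat.apply_firstDiff_ne hne⟩,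
    (mem_cyl_mk hr₁).2 ?_, (mem_cyl_mk hr₂).2 ?_⟩
  · simpa using h₁
  · simpa using h₂

lemma restrict_branchCyl_eq {μA : Measure (Boundary k)} [IsFiniteMeasure μA]
    (hμA : ∀ v : F k, v ≠ 1 →
      μA (Cyl k v) = ((2 * k : ℝ≥0∞) * (2 * k - 1) ^ (wordLength k v - 1))⁻¹)
    {ηA : Measure (Boundary k × Boundary k)}
    (hηA' : ∀ x y : F k, ηA (Cyl2 k x y) = μA (Cyl k (x⁻¹ * y))) (i : Branch k) :
    ηA.restrict i.cyl =
      ((μA.prod μA).withDensity fun p => uniformDensity k (commonLen k p)).restrict i.cyl := by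
  have hcyl : MeasurableSet i.cyl := (measurableSet_cyl _).prod (measurableSet_cyl _)
  have hdensity : ∀ S ⊆ i.cyl, MeasurableSet S →
      (μA.prod μA).withDensity (fun p => uniformDensity k (commonLen k p)) S =
        uniformDensity k i.stem.length * μA.prod μA S := fun S hS hSm => by
    rw [withDensity_apply _ hSm, setLIntegral_congr_fun hSm fun p hp => by
      rw [commonLen_of_mem_branchCyl (hS hp)], setLIntegral_const, mul_comm]
  have hη : ηA i.cyl = uniformDensity k i.stem.length * μA.prod μA i.cyl :=
    measure_cyl_prod_cyl (s := []) (t := []) hμA hηA' i.isReduced_left i.isReduced_right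
      i.left_ne_right
  refine restrict_eq_of_cyl_prod ?_ fun u v => ?_
  · rw [hη]
    exact ENNReal.mul_ne_top (uniformDensity_ne_top i.left.1.pos _) (measure_ne_top _ _)
  rw [hdensity _ Set.inter_subset_left
      (hcyl.inter ((measurableSet_cyl u).prod (measurableSet_cyl v))),
    Branch.cyl, Set.prod_inter_prod]
  rcases cyl_mk_inter_cyl i.isReduced_left u with h₁ | ⟨s, hs, h₁⟩
  · simp [h₁]
  rcases cyl_mk_inter_cyl i.isReduced_right v with h₂ | ⟨t, ht, h₂⟩
  · simp [h₂]
  rw [h₁, h₂]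
  simp only [List.append_assoc, List.singleton_append] at hs ht ⊢
  exact measure_cyl_prod_cyl hμA hηA' hs ht i.left_ne_right

theorem uniform_current_density_general (k : ℕ)
    (μA : Measure (Boundary k)) [IsProbabilityMeasure μA]
    (hμA : ∀ v : F k, v ≠ 1 →
      μA (Cyl k v) = ((2 * k : ℝ≥0∞) * (2 * k - 1) ^ (wordLength k v - 1))⁻¹)
    (ηA : Measure (Boundary k × Boundary k))
    (hηA' : ∀ x y : F k, ηA (Cyl2 k x y) = μA (Cyl k (x⁻¹ * y)))
    (W : Set (Boundary k × Boundary k)) (hW : MeasurableSet W) (hWD : W ⊆ D2 k) :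
    ηA W = ∫⁻ p in W,
      (2 * k : ℝ≥0∞) * (2 * k - 1 : ℝ≥0∞) ^ (2 * (commonLen k p : ℤ) - 1)
        ∂(μA.prod μA) := by
  have hcover : W ⊆ ⋃ i : Branch k, i.cyl := hWD.trans D2_subset_iUnion_branchCyl
  have hrestrict := Measure.restrict_iUnion_congr.2 (restrict_branchCyl_eq hμA hηA')
  rw [← withDensity_apply _ hW, ← Measure.restrict_eq_self ηA hcover, hrestrict,
    Measure.restrict_eq_self _ hcover]
  rfl

theorem uniform_current_density (k : ℕ) (hk : 2 ≤ k)
    (μA : Measure (Boundary k)) [IsProbabilityMeasure μA]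
    (hμA : ∀ v : F k, v ≠ 1 →
      μA (Cyl k v) = ((2 * k : ℝ≥0∞) * (2 * k - 1) ^ (wordLength k v - 1))⁻¹)
    (ηA : Measure (Boundary k × Boundary k)) (hηA : IsCurrent k ηA)
    (hηA' : ∀ x y : F k, ηA (Cyl2 k x y) = μA (Cyl k (x⁻¹ * y)))
    (W : Set (Boundary k × Boundary k)) (hW : MeasurableSet W) (hWD : W ⊆ D2 k) :
    ηA W = ∫⁻ p in W,
      (2 * k : ℝ≥0∞) * (2 * k - 1 : ℝ≥0∞) ^ (2 * (commonLen k p : ℤ) - 1)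
        ∂(μA.prod μA) :=
  uniform_current_density_general k μA hμA ηA hηA' W hW hWD

end

end FGC
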